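/- In QHC, ⊢ !?α → !?β ↔ !(?α → ?β): the problem !(?α → ?β) is equivalent to the implication !?α → !?β. -/

import Mathlib

/- Problem (intuitionistic) formulas and proposition (classical) formulas of QHC. -/
mutual
inductive PF : Type
  | var : Nat → PF
  | bot : PF
  | and : PF → PF → PF
  | or : PF → PF → PF
  | imp : PF → PF → PF
  | bang : CF → PF
inductive CF : Type
  | var : Nat → CF
  | fls : CF
  | and : CF → CF → CF
  | or : CF → CF → CF
  | imp : CF → CF → CF
  | quest : PF → CF
end

def PF.neg (α : PF) : PF := α.imp PF.bot
def CF.neg (p : CF) : CF := p.imp CF.fls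
def PF.iff (α β : PF) : PF := (α.imp β).and (β.imp α)
def CF.iff (p q : CF) : CF := (p.imp q).and (q.imp p)
def CF.box (p : CF) : CF := CF.quest (PF.bang p)
def PF.nabla (α : PF) : PF := PF.bang (CF.quest α)

/- Derivability in QHC, parameterized by a set `Ax` of extra problem axioms
(used to treat the axiom ¬!0 and its variants uniformly). Intuitionistic logic
on problems, classical logic on propositions, the rules α ⊢ ?α and p ⊢ !p, and
the mixed axioms ?!p → p, α → !?α, !(p→q) → (!p → !q), ?(α→β) → (?α → ?β). -/
mutual
inductive ProvP (Ax : PF → Prop) : PF → Prop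
  | axm {α} : Ax α → ProvP Ax α
  | mp {α β} : ProvP Ax (α.imp β) → ProvP Ax α → ProvP Ax β
  | ak (α β : PF) : ProvP Ax (α.imp (β.imp α))
  | as (α β γ : PF) : ProvP Ax ((α.imp (β.imp γ)).imp ((α.imp β).imp (α.imp γ)))
  | andI (α β : PF) : ProvP Ax (α.imp (β.imp (α.and β)))
  | andE1 (α β : PF) : ProvP Ax ((α.and β).imp α)
  | andE2 (α β : PF) : ProvP Ax ((α.and β).imp β)
  | orI1 (α β : PF) : ProvP Ax (α.imp (α.or β))
  | orI2 (α β : PF) : ProvP Ax (β.imp (α.or β))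
  | orE (α β γ : PF) : ProvP Ax ((α.imp γ).imp ((β.imp γ).imp ((α.or β).imp γ)))
  | exf (α : PF) : ProvP Ax (PF.bot.imp α)
  | bangIntro {p} : ProvC Ax p → ProvP Ax (PF.bang p)
  | bangImp (p q : CF) : ProvP Ax ((PF.bang (p.imp q)).imp ((PF.bang p).imp (PF.bang q)))
  | bangQuest (α : PF) : ProvP Ax (α.imp (PF.bang (CF.quest α)))
inductive ProvC (Ax : PF → Prop) : CF → Prop
  | mp {p q} : ProvC Ax (p.imp q) → ProvC Ax p → ProvC Ax q
  | ak (p q : CF) : ProvC Ax (p.imp (q.imp p))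
  | as (p q r : CF) : ProvC Ax ((p.imp (q.imp r)).imp ((p.imp q).imp (p.imp r)))
  | andI (p q : CF) : ProvC Ax (p.imp (q.imp (p.and q)))
  | andE1 (p q : CF) : ProvC Ax ((p.and q).imp p)
  | andE2 (p q : CF) : ProvC Ax ((p.and q).imp q)
  | orI1 (p q : CF) : ProvC Ax (p.imp (p.or q))
  | orI2 (p q : CF) : ProvC Ax (q.imp (p.or q))
  | orE (p q r : CF) : ProvC Ax ((p.imp r).imp ((q.imp r).imp ((p.or q).imp r)))
  | exf (p : CF) : ProvC Ax (CF.fls.imp p)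
  | lem (p : CF) : ProvC Ax (p.or (p.imp CF.fls))
  | questIntro {α} : ProvP Ax α → ProvC Ax (CF.quest α)
  | questImp (α β : PF) : ProvC Ax ((CF.quest (α.imp β)).imp ((CF.quest α).imp (CF.quest β)))
  | questBang (p : CF) : ProvC Ax ((CF.quest (PF.bang p)).imp p)
end

/-- The axiom (!⊥): ¬!0. -/
def QHCAx : PF → Prop := fun α => α = (PF.bang CF.fls).imp PF.bot

/-- Derivability of a problem in QHC. -/
def PrvP (α : PF) : Prop := ProvP QHCAx α
/-- Derivability of a proposition in QHC. -/
def PrvC (p : CF) : Prop := ProvC QHCAx p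

/-!
One direction is the axiom `!(p → q) → (!p → !q)`. For the other, suppose `⊢ p → ?!p`, as holds
for `p = ?α` because `α → !?α` passes under `?`. Then `γ := !p → !q` gives `γ → !?γ`, and
classically `?γ → (?!p → ?!q) → (p → q)` by `p → ?!p` and `?!q → q`; applying `!` finishes.
-/

variable {Ax : PF → Prop}

namespace ProvC

theorem imp_comp_right {p q r : CF} (hqr : ProvC Ax (q.imp r)) :
    ProvC Ax ((p.imp q).imp (p.imp r)) :=
  ProvC.mp (ProvC.as p q r) (ProvC.mp (ProvC.ak (q.imp r) p) hqr)

theorem imp_trans {p q r : CF} (hpq : ProvC Ax (p.imp q)) (hqr : ProvC Ax (q.imp r)) :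
    ProvC Ax (p.imp r) :=
  ProvC.mp (imp_comp_right hqr) hpq

theorem imp_comp_left {p q r : CF} (hpq : ProvC Ax (p.imp q)) :
    ProvC Ax ((q.imp r).imp (p.imp r)) :=
  ProvC.mp
    (ProvC.mp (ProvC.as (q.imp r) (p.imp q) (p.imp r))
      (imp_trans (ProvC.ak (q.imp r) p) (ProvC.as p q r)))
    (ProvC.mp (ProvC.ak (p.imp q) (q.imp r)) hpq)

theorem imp_imp_imp {a b c d : CF} (hca : ProvC Ax (c.imp a)) (hbd : ProvC Ax (b.imp d)) :
    ProvC Ax ((a.imp b).imp (c.imp d)) :=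
  imp_trans (imp_comp_right hbd) (imp_comp_left hca)

theorem quest_mono {α β : PF} (h : ProvP Ax (α.imp β)) :
    ProvC Ax ((CF.quest α).imp (CF.quest β)) :=
  ProvC.mp (ProvC.questImp α β) (ProvC.questIntro h)

theorem quest_imp_box (α : PF) : ProvC Ax ((CF.quest α).imp (CF.quest α).box) :=
  quest_mono (ProvP.bangQuest α)

end ProvC

namespace ProvP

theorem imp_trans {α β γ : PF} (hαβ : ProvP Ax (α.imp β)) (hβγ : ProvP Ax (β.imp γ)) :
    ProvP Ax (α.imp γ) :=
  ProvP.mp (ProvP.mp (ProvP.as α β γ) (ProvP.mp (ProvP.ak (β.imp γ) α) hβγ)) hαβ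

theorem bang_mono {p q : CF} (h : ProvC Ax (p.imp q)) :
    ProvP Ax ((PF.bang p).imp (PF.bang q)) :=
  ProvP.mp (ProvP.bangImp p q) (ProvP.bangIntro h)

theorem iff_intro {α β : PF} (hαβ : ProvP Ax (α.imp β)) (hβα : ProvP Ax (β.imp α)) :
    ProvP Ax (α.iff β) :=
  ProvP.mp (ProvP.mp (ProvP.andI _ _) hαβ) hβα

theorem imp_bang_imp_of_imp_box {p : CF} (hp : ProvC Ax (p.imp p.box)) (q : CF) :
    ProvP Ax (((PF.bang p).imp (PF.bang q)).imp (PF.bang (p.imp q))) := by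
  have hquest : ProvC Ax ((CF.quest ((PF.bang p).imp (PF.bang q))).imp (p.imp q)) :=
    ProvC.imp_trans (ProvC.questImp (PF.bang p) (PF.bang q))
      (ProvC.imp_imp_imp hp (ProvC.questBang q))
  exact imp_trans (ProvP.bangQuest _) (bang_mono hquest)

end ProvP

theorem qhc_bang_quest_imp (α β : PF) :
    PrvP (PF.iff ((PF.bang (CF.quest α)).imp (PF.bang (CF.quest β)))
      (PF.bang ((CF.quest α).imp (CF.quest β)))) :=
  ProvP.iff_intro (ProvP.imp_bang_imp_of_imp_box (ProvC.quest_imp_box α) (CF.quest β))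
    (ProvP.bangImp (CF.quest α) (CF.quest β))
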